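/- Let E = EuclideanSpace ℝ (Fin n), ξ ∈ E with ‖ξ‖ = 1, and μ a Borel probability measure on E satisfying the standing integrability assumption whose topological support is not contained in any affine line {p + tξ : t ∈ ℝ} (p ∈ E). Let (β_m) be a sequence in [0, 1) converging to 1 and, for each m, let q_m ∈ E be a minimizer of G_{β_m ξ}. Then for every x ∈ E, ‖q_m − x‖ → ∞ as m → ∞. (Euclidean case of Theorem 6.1(b): extreme quantiles escape every bounded set.) -/

import Mathlib

/-!
Write `G_u = quantileRisk μ u`. The estimate `|ρ_u - ρ_v| ≤ ‖u - v‖ ‖p - x‖` makes `G_{β ξ}`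
converge to `G_ξ` uniformly on bounded sets as `β → 1`. The limit `G_ξ` is continuous and has no
minimizer: it is positive, because `ρ_ξ(x, p) = 0` puts `x` on the half-line `p - ℝ≥0 ξ`, so
`G_ξ(p) = 0` would confine the support of `μ` to a line in direction `ξ`; and it tends to `0`
along the ray `R ξ`, `R → ∞`, by dominated convergence. Minimizers of functions converging
uniformly on compacts to a continuous function without a minimizer leave every compact set.
-/

open MeasureTheory Filter Topology

/-- The data-based geometric quantile loss in Euclidean space:
`ρ_u(x,p) = ‖p − x‖ − ⟪u, p − x⟫`. -/
noncomputable def quantileLoss {n : ℕ} (u x p : EuclideanSpace ℝ (Fin n)) : ℝ :=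
  ‖p - x‖ - inner ℝ u (p - x)

/-- The topological support of a measure: points all of whose neighbourhoods have
positive measure. -/
def measSupport {α : Type*} [TopologicalSpace α] [MeasurableSpace α]
    (μ : Measure α) : Set α :=
  {x | ∀ U ∈ nhds x, μ U ≠ 0}

open Set

theorem measSupport_subset_of_ae_mem {α : Type*} [TopologicalSpace α] [MeasurableSpace α]
    {μ : Measure α} {s : Set α} (hs : IsClosed s) (h : ∀ᵐ x ∂μ, x ∈ s) : measSupport μ ⊆ s :=
  fun _ hy => by_contra fun hys => hy sᶜ (hs.isOpen_compl.mem_nhds hys) h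

theorem tendsto_cocompact_of_forall_le_of_tendstoUniformlyOn {ι α : Type*} [TopologicalSpace α]
    {l : Filter ι} {F : ι → α → ℝ} {G : α → ℝ} {q : ι → α}
    (hF : ∀ K, IsCompact K → TendstoUniformlyOn F G l K) (hG : Continuous G)
    (hG_no_min : ∀ p, ∃ p', G p' < G p) (hq : ∀ i p, F i (q i) ≤ F i p) :
    Tendsto q l (cocompact α) := by
  refine hasBasis_cocompact.tendsto_right_iff.2 fun K hK => ?_
  rcases K.eq_empty_or_nonempty with rfl | hKne
  · simp
  obtain ⟨p₀, -, hp₀⟩ := hK.exists_isMinOn hKne hG.continuousOn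
  obtain ⟨p', hp'⟩ := hG_no_min p₀
  have hη : 0 < (G p₀ - G p') / 2 := by linarith
  filter_upwards [Metric.tendstoUniformlyOn_iff.1 (hF _ (hK.insert p')) _ hη] with i hi hqK
  have h₁ := hi (q i) (mem_insert_of_mem _ hqK)
  have h₂ := hi p' (mem_insert _ _)
  rw [Real.dist_eq, abs_lt] at h₁ h₂
  have h₀ : G p₀ ≤ G (q i) := hp₀ hqK
  linarith [hq i p']

section

variable {n : ℕ}

theorem quantileLoss_self (u p : EuclideanSpace ℝ (Fin n)) : quantileLoss u p p = 0 := by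
  simp [quantileLoss]

theorem mul_norm_sub_le_quantileLoss (u x p : EuclideanSpace ℝ (Fin n)) :
    (1 - ‖u‖) * ‖p - x‖ ≤ quantileLoss u x p := by
  have := real_inner_le_norm u (p - x)
  rw [quantileLoss]; linarith

theorem quantileLoss_nonneg {u : EuclideanSpace ℝ (Fin n)} (hu : ‖u‖ ≤ 1)
    (x p : EuclideanSpace ℝ (Fin n)) : 0 ≤ quantileLoss u x p :=
  (mul_nonneg (sub_nonneg.2 hu) (norm_nonneg _)).trans (mul_norm_sub_le_quantileLoss u x p)

theorem abs_quantileLoss_sub_le (u x y p p' : EuclideanSpace ℝ (Fin n)) :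
    |quantileLoss u x p - quantileLoss u y p'| ≤ (1 + ‖u‖) * ‖(p - x) - (p' - y)‖ := by
  have h₁ := abs_norm_sub_norm_le (p - x) (p' - y)
  have h₂ := abs_real_inner_le_norm u ((p - x) - (p' - y))
  rw [inner_sub_right] at h₂
  calc |quantileLoss u x p - quantileLoss u y p'|
      = |(‖p - x‖ - ‖p' - y‖) - (inner ℝ u (p - x) - inner ℝ u (p' - y))| := by
        rw [quantileLoss, quantileLoss]; ring_nf
    _ ≤ |‖p - x‖ - ‖p' - y‖| + |inner ℝ u (p - x) - inner ℝ u (p' - y)| := abs_sub _ _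
    _ ≤ (1 + ‖u‖) * ‖(p - x) - (p' - y)‖ := by linarith

theorem abs_quantileLoss_le (u x p : EuclideanSpace ℝ (Fin n)) :
    |quantileLoss u x p| ≤ (1 + ‖u‖) * ‖p - x‖ := by
  simpa [quantileLoss_self] using abs_quantileLoss_sub_le u x x p x

theorem abs_quantileLoss_sub_quantileLoss_le (u v x p : EuclideanSpace ℝ (Fin n)) :
    |quantileLoss u x p - quantileLoss v x p| ≤ ‖u - v‖ * ‖p - x‖ := by
  calc |quantileLoss u x p - quantileLoss v x p| = |inner ℝ (u - v) (p - x)| := by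
        rw [inner_sub_left, ← abs_neg, quantileLoss, quantileLoss]; ring_nf
    _ ≤ ‖u - v‖ * ‖p - x‖ := abs_real_inner_le_norm _ _

theorem continuous_quantileLoss (u p : EuclideanSpace ℝ (Fin n)) :
    Continuous fun x => quantileLoss u x p := by
  unfold quantileLoss; fun_prop

theorem exists_eq_add_smul_of_quantileLoss_eq_zero {ξ x p : EuclideanSpace ℝ (Fin n)}
    (hξ : ‖ξ‖ = 1) (h : quantileLoss ξ x p = 0) : ∃ t : ℝ, x = p + t • ξ := by
  have hinner : inner ℝ ξ (p - x) = ‖ξ‖ * ‖p - x‖ := by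
    rw [hξ, one_mul]; rw [quantileLoss] at h; linarith
  rw [inner_eq_norm_mul_iff_real, hξ, one_smul] at hinner
  exact ⟨-‖p - x‖, by rw [neg_smul, hinner]; abel⟩

theorem inner_smul_sub_of_norm_eq_one {ξ : EuclideanSpace ℝ (Fin n)} (hξ : ‖ξ‖ = 1) (R : ℝ)
    (x : EuclideanSpace ℝ (Fin n)) :
    inner ℝ ξ (R • ξ - x) = R - inner ℝ ξ x := by
  rw [inner_sub_right, real_inner_smul_right, real_inner_self_eq_norm_sq, hξ]; ring

theorem quantileLoss_smul_le {ξ x : EuclideanSpace ℝ (Fin n)} (hξ : ‖ξ‖ = 1) {R : ℝ}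
    (hR : ‖x‖ < R) :
    quantileLoss ξ x (R • ξ) ≤ ‖x‖ ^ 2 / (R - ‖x‖) := by
  have ht := abs_le.1 (abs_real_inner_le_norm ξ x)
  have hsq : ‖R • ξ - x‖ ^ 2 = R ^ 2 - 2 * R * inner ℝ ξ x + ‖x‖ ^ 2 := by
    rw [norm_sub_sq_real, norm_smul, real_inner_smul_left, hξ, mul_one, Real.norm_eq_abs,
      sq_abs]; ring
  have hnonneg := quantileLoss_nonneg hξ.le x (R • ξ)
  rw [hξ, one_mul] at ht
  rw [quantileLoss, inner_smul_sub_of_norm_eq_one hξ] at hnonneg ⊢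
  rw [le_div_iff₀ (by linarith)]
  -- `ρ_ξ(x, Rξ) * (‖Rξ - x‖ + ⟪ξ, Rξ - x⟫) = ‖x‖² - ⟪ξ, x⟫²`
  nlinarith [norm_nonneg (R • ξ - x)]

theorem quantileLoss_smul_le_two_mul {ξ : EuclideanSpace ℝ (Fin n)} (hξ : ‖ξ‖ = 1)
    (x : EuclideanSpace ℝ (Fin n)) {R : ℝ} (hR : 0 ≤ R) :
    quantileLoss ξ x (R • ξ) ≤ 2 * ‖x‖ := by
  have h₁ : ‖R • ξ - x‖ ≤ R + ‖x‖ := by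
    simpa [norm_smul, hξ, abs_of_nonneg hR] using norm_sub_le (R • ξ) x
  have h₂ := real_inner_le_norm ξ x
  rw [quantileLoss, inner_smul_sub_of_norm_eq_one hξ]
  rw [hξ, one_mul] at h₂
  linarith

noncomputable def quantileRisk (μ : Measure (EuclideanSpace ℝ (Fin n)))
    (u p : EuclideanSpace ℝ (Fin n)) : ℝ :=
  ∫ x, quantileLoss u x p ∂μ

variable {μ : Measure (EuclideanSpace ℝ (Fin n))}

theorem integrable_id_of_integrable_quantileLoss [IsFiniteMeasure μ]
    {u p : EuclideanSpace ℝ (Fin n)} (hu : ‖u‖ < 1)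
    (h : Integrable (fun x => quantileLoss u x p) μ) : Integrable id μ := by
  refine ((h.const_mul (1 - ‖u‖)⁻¹).add (integrable_const ‖p‖)).mono' aestronglyMeasurable_id
    (Eventually.of_forall fun x => ?_)
  have hρ := mul_norm_sub_le_quantileLoss u x p
  rw [← le_inv_mul_iff₀ (sub_pos.2 hu)] at hρ
  have := norm_le_norm_add_norm_sub' x p
  rw [norm_sub_rev] at this
  simp only [id, Pi.add_apply]
  linarith

theorem integrable_quantileLoss [IsFiniteMeasure μ] (hμ : Integrable id μ)
    (u p : EuclideanSpace ℝ (Fin n)) :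
    Integrable (fun x => quantileLoss u x p) μ :=
  (((integrable_const p).sub hμ).norm.const_mul (1 + ‖u‖)).mono'
    (continuous_quantileLoss u p).aestronglyMeasurable
    (Eventually.of_forall fun x => abs_quantileLoss_le u x p)

theorem lipschitzWith_quantileRisk [IsProbabilityMeasure μ] (hμ : Integrable id μ)
    (u : EuclideanSpace ℝ (Fin n)) : LipschitzWith (1 + ‖u‖₊) (quantileRisk μ u) := by
  refine LipschitzWith.of_dist_le_mul fun p p' => ?_
  have hbound : ∀ x, ‖quantileLoss u x p - quantileLoss u x p'‖ ≤ (1 + ‖u‖) * ‖p - p'‖ := by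
    simpa using fun x => abs_quantileLoss_sub_le u x x p p'
  calc dist (quantileRisk μ u p) (quantileRisk μ u p')
      = ‖∫ x, (quantileLoss u x p - quantileLoss u x p') ∂μ‖ := by
        rw [integral_sub (integrable_quantileLoss hμ u p) (integrable_quantileLoss hμ u p'),
          dist_eq_norm, quantileRisk, quantileRisk]
    _ ≤ ∫ _, (1 + ‖u‖) * ‖p - p'‖ ∂μ :=
        norm_integral_le_of_norm_le (integrable_const _) (Eventually.of_forall hbound)
    _ = (1 + ‖u‖₊) * dist p p' := by simp [dist_eq_norm]

theorem abs_quantileRisk_sub_le [IsProbabilityMeasure μ] (hμ : Integrable id μ)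
    (u v p : EuclideanSpace ℝ (Fin n)) :
    |quantileRisk μ u p - quantileRisk μ v p| ≤ ‖u - v‖ * (‖p‖ + ∫ x, ‖x‖ ∂μ) := by
  have hbound : ∀ x, ‖quantileLoss u x p - quantileLoss v x p‖ ≤ ‖u - v‖ * (‖p‖ + ‖x‖) :=
    fun x => (abs_quantileLoss_sub_quantileLoss_le u v x p).trans
      (mul_le_mul_of_nonneg_left (norm_sub_le p x) (norm_nonneg _))
  calc |quantileRisk μ u p - quantileRisk μ v p|
      = ‖∫ x, (quantileLoss u x p - quantileLoss v x p) ∂μ‖ := by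
        rw [integral_sub (integrable_quantileLoss hμ u p) (integrable_quantileLoss hμ v p),
          Real.norm_eq_abs, quantileRisk, quantileRisk]
    _ ≤ ∫ x, ‖u - v‖ * (‖p‖ + ‖x‖) ∂μ := norm_integral_le_of_norm_le
        (((integrable_const _).add hμ.norm).const_mul _) (Eventually.of_forall hbound)
    _ = ‖u - v‖ * (‖p‖ + ∫ x, ‖x‖ ∂μ) := by
        rw [integral_const_mul, integral_add (g := fun x => ‖x‖) (integrable_const _) hμ.norm]
        simp

theorem tendstoUniformlyOn_quantileRisk [IsProbabilityMeasure μ] (hμ : Integrable id μ)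
    {ι : Type*} {l : Filter ι} {u : ι → EuclideanSpace ℝ (Fin n)} {v : EuclideanSpace ℝ (Fin n)}
    (hu : Tendsto u l (𝓝 v)) {K : Set (EuclideanSpace ℝ (Fin n))} (hK : Bornology.IsBounded K) :
    TendstoUniformlyOn (fun i => quantileRisk μ (u i)) (quantileRisk μ v) l K := by
  obtain ⟨r, hr⟩ := hK.exists_norm_le
  have hsmall : Tendsto (fun i => ‖v - u i‖ * (r + ∫ x, ‖x‖ ∂μ)) l (𝓝 0) := by
    simpa [norm_sub_rev] using (tendsto_iff_norm_sub_tendsto_zero.1 hu).mul_const _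
  refine Metric.tendstoUniformlyOn_iff.2 fun ε hε => ?_
  filter_upwards [hsmall.eventually (gt_mem_nhds hε)] with i hi p hp
  calc dist (quantileRisk μ v p) (quantileRisk μ (u i) p)
      ≤ ‖v - u i‖ * (‖p‖ + ∫ x, ‖x‖ ∂μ) := abs_quantileRisk_sub_le hμ v (u i) p
    _ ≤ ‖v - u i‖ * (r + ∫ x, ‖x‖ ∂μ) := by gcongr; exact hr p hp
    _ < ε := hi

theorem quantileRisk_pos [IsFiniteMeasure μ] (hμ : Integrable id μ)
    {ξ p : EuclideanSpace ℝ (Fin n)} (hξ : ‖ξ‖ = 1)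
    (hsupp : ¬ measSupport μ ⊆ {y | ∃ t : ℝ, y = p + t • ξ}) :
    0 < quantileRisk μ ξ p := by
  have hnonneg : 0 ≤ fun x => quantileLoss ξ x p := fun x => quantileLoss_nonneg hξ.le x p
  refine (integral_nonneg hnonneg).lt_of_ne fun h => hsupp ?_
  have hzero : ∀ᵐ x ∂μ, x ∈ {x | quantileLoss ξ x p = 0} :=
    (integral_eq_zero_iff_of_nonneg hnonneg (integrable_quantileLoss hμ ξ p)).1 h.symm
  exact (measSupport_subset_of_ae_mem (isClosed_eq (continuous_quantileLoss ξ p)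
    continuous_const) hzero).trans fun x => exists_eq_add_smul_of_quantileLoss_eq_zero hξ

theorem tendsto_quantileRisk_smul_atTop [IsFiniteMeasure μ] (hμ : Integrable id μ)
    {ξ : EuclideanSpace ℝ (Fin n)} (hξ : ‖ξ‖ = 1) :
    Tendsto (fun R : ℝ => quantileRisk μ ξ (R • ξ)) atTop (𝓝 0) := by
  have hbound : ∀ᶠ R : ℝ in atTop, ∀ᵐ x ∂μ, ‖quantileLoss ξ x (R • ξ)‖ ≤ 2 * ‖x‖ := by
    filter_upwards [eventually_ge_atTop (0 : ℝ)] with R hR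
    refine Eventually.of_forall fun x => ?_
    rw [Real.norm_of_nonneg (quantileLoss_nonneg hξ.le x _)]
    exact quantileLoss_smul_le_two_mul hξ x hR
  have hlim : ∀ x, Tendsto (fun R : ℝ => quantileLoss ξ x (R • ξ)) atTop (𝓝 0) := by
    intro x
    refine squeeze_zero' (Eventually.of_forall fun R => quantileLoss_nonneg hξ.le x _)
      ((eventually_gt_atTop ‖x‖).mono fun R hR => quantileLoss_smul_le hξ hR)
      (tendsto_const_nhds.div_atTop (tendsto_atTop_add_const_right _ _ tendsto_id))
  simpa [quantileRisk] using tendsto_integral_filter_of_dominated_convergence (μ := μ) _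
    (Eventually.of_forall fun R => (continuous_quantileLoss ξ (R • ξ)).aestronglyMeasurable)
    hbound (hμ.norm.const_mul 2) (Eventually.of_forall hlim)

end

theorem extreme_quantiles_escape_to_infinity_general
    {n : ℕ} (μ : Measure (EuclideanSpace ℝ (Fin n))) [IsProbabilityMeasure μ]
    (hμint : ∃ (u₀ p₀ : EuclideanSpace ℝ (Fin n)), ‖u₀‖ < 1 ∧
      Integrable (fun x => quantileLoss u₀ x p₀) μ)
    (ξ : EuclideanSpace ℝ (Fin n)) (hξ : ‖ξ‖ = 1)
    (hsupp : ¬ ∃ p : EuclideanSpace ℝ (Fin n),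
      measSupport μ ⊆ {y | ∃ t : ℝ, y = p + t • ξ})
    (β : ℕ → ℝ)
    (hβlim : Tendsto β atTop (nhds 1))
    (q : ℕ → EuclideanSpace ℝ (Fin n))
    (hq : ∀ m, ∀ p, ∫ x, quantileLoss (β m • ξ) x (q m) ∂μ
        ≤ ∫ x, quantileLoss (β m • ξ) x p ∂μ) :
    ∀ x : EuclideanSpace ℝ (Fin n), Tendsto (fun m => ‖q m - x‖) atTop atTop := by
  obtain ⟨u₀, p₀, hu₀, hint⟩ := hμint
  have hμ : Integrable id μ := integrable_id_of_integrable_quantileLoss hu₀ hint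
  have hG_no_min : ∀ p, ∃ p', quantileRisk μ ξ p' < quantileRisk μ ξ p := by
    intro p
    have hpos := quantileRisk_pos hμ hξ fun h => hsupp ⟨p, h⟩
    obtain ⟨R, hR⟩ :=
      ((tendsto_quantileRisk_smul_atTop hμ hξ).eventually (gt_mem_nhds hpos)).exists
    exact ⟨R • ξ, hR⟩
  have hβξ : Tendsto (fun m => β m • ξ) atTop (𝓝 ξ) := by
    simpa using hβlim.smul_const ξ
  have hq_cocompact : Tendsto q atTop (cocompact _) :=
    tendsto_cocompact_of_forall_le_of_tendstoUniformlyOn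
      (fun K hK => tendstoUniformlyOn_quantileRisk hμ hβξ hK.isBounded)
      (lipschitzWith_quantileRisk hμ ξ).continuous hG_no_min hq
  intro x
  simpa only [dist_eq_norm, Function.comp_def] using
    (tendsto_dist_right_cocompact_atTop x).comp hq_cocompact

/-- Euclidean case of Theorem 6.1(b): along any sequence `β_m → 1⁻`, the corresponding
`(β_m ξ)`-quantiles escape every bounded set. -/
theorem extreme_quantiles_escape_to_infinity
    {n : ℕ} (μ : Measure (EuclideanSpace ℝ (Fin n))) [IsProbabilityMeasure μ]
    (hμint : ∃ (u₀ p₀ : EuclideanSpace ℝ (Fin n)), ‖u₀‖ < 1 ∧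
      Integrable (fun x => quantileLoss u₀ x p₀) μ)
    (ξ : EuclideanSpace ℝ (Fin n)) (hξ : ‖ξ‖ = 1)
    (hsupp : ¬ ∃ p : EuclideanSpace ℝ (Fin n),
      measSupport μ ⊆ {y | ∃ t : ℝ, y = p + t • ξ})
    (β : ℕ → ℝ) (hβ : ∀ m, β m ∈ Set.Ico (0 : ℝ) 1)
    (hβlim : Tendsto β atTop (nhds 1))
    (q : ℕ → EuclideanSpace ℝ (Fin n))
    (hq : ∀ m, ∀ p, ∫ x, quantileLoss (β m • ξ) x (q m) ∂μ
        ≤ ∫ x, quantileLoss (β m • ξ) x p ∂μ) :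
    ∀ x : EuclideanSpace ℝ (Fin n), Tendsto (fun m => ‖q m - x‖) atTop atTop :=
  extreme_quantiles_escape_to_infinity_general μ hμint ξ hξ hsupp β hβlim q hq
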